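/- Let φ ∈ L^∞(𝕋ⁿ). If the Hankel operator H_{φ,△ₙ} is compact, then H_{φ,△ₙ} = 0. In other words, the zero operator is the only compact Hankel operator on H²(∂_d△ₙ). -/

import Mathlib

open MeasureTheory Filter Topology ComplexConjugate

noncomputable section

instance fact_one_pos : Fact ((0:ℝ) < 1) := ⟨one_pos⟩

abbrev Torus (n : ℕ) := Fin n → AddCircle (1 : ℝ)

abbrev L2T (n : ℕ) := Lp ℂ 2 (volume : Measure (Torus n))

abbrev LinfT (n : ℕ) := Lp ℂ ⊤ (volume : Measure (Torus n))

def char {n : ℕ} (α : Fin n → ℤ) : Torus n → ℂ := fun x => ∏ j, fourier (α j) (x j)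

lemma char_continuous {n : ℕ} (α : Fin n → ℤ) : Continuous (char α) :=
  continuous_finset_prod _ fun j _ => (fourier (α j)).continuous.comp (continuous_apply j)

lemma char_memLp {n : ℕ} (α : Fin n → ℤ) (p : ENNReal) :
    MemLp (char α) p (volume : Measure (Torus n)) := by
  refine (memLp_top_of_bound ((char_continuous α).aestronglyMeasurable) 1 ?_).mono_exponent le_top
  filter_upwards with x
  simp only [char, norm_prod]
  calc ∏ j, ‖fourier (α j) (x j)‖
      = ∏ j : Fin n, (1:ℝ) := by
        refine Finset.prod_congr rfl fun j _ => ?_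
        rw [fourier_apply]; exact Circle.norm_coe _
    _ ≤ 1 := by simp

def charL2 {n : ℕ} (α : Fin n → ℤ) : L2T n := (char_memLp α 2).toLp (char α)

def hardyT (n : ℕ) : Submodule ℂ (L2T n) :=
  (Submodule.span ℂ
    (charL2 '' {α : Fin n → ℤ | ∀ k : Fin n, 0 ≤ (∑ j ∈ Finset.Iic k, α j) + (k.val : ℤ)})).topologicalClosure

def hardyD (n : ℕ) : Submodule ℂ (L2T n) :=
  (Submodule.span ℂ (charL2 '' {α : Fin n → ℤ | ∀ j, 0 ≤ α j})).topologicalClosure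

instance hardyT.completeSpace (n : ℕ) : CompleteSpace (hardyT n) :=
  (Submodule.isClosed_topologicalClosure _).completeSpace_coe

instance hardyD.completeSpace (n : ℕ) : CompleteSpace (hardyD n) :=
  (Submodule.isClosed_topologicalClosure _).completeSpace_coe

def IsToeplitzOn {n : ℕ} (K : Submodule ℂ (L2T n)) (φ : Torus n → ℂ) (T : K →L[ℂ] K) : Prop :=
  ∀ f g : K,
    (inner ℂ ((g : L2T n)) ((T f : L2T n)) : ℂ) =
      ∫ x, conj ((g : L2T n) x) * (φ x * (f : L2T n) x) ∂volume

def IsCoordMult {n : ℕ} (j : Fin n) (M : hardyT n →L[ℂ] hardyT n) : Prop :=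
  ∀ f : hardyT n,
    ((M f : L2T n) : Torus n → ℂ) =ᵐ[volume]
      fun x => fourier 1 (x j) * ((f : L2T n) : Torus n → ℂ) x

def IsHankelT {n : ℕ} (φ : Torus n → ℂ) (H : hardyT n →L[ℂ] L2T n) : Prop :=
  (∀ f : hardyT n, H f ∈ (hardyT n)ᗮ) ∧
    ∀ f : hardyT n, ∀ g : L2T n, g ∈ (hardyT n)ᗮ →
      (inner ℂ g (H f) : ℂ) = ∫ x, conj (g x) * (φ x * (f : L2T n) x) ∂volume

def IsAnalyticSymbolF {n : ℕ} (φ : Torus n → ℂ) : Prop :=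
  ∀ α : Fin n → ℤ, (¬ ∀ k : Fin n, 0 ≤ ∑ j ∈ Finset.Iic k, α j) →
    ∫ x, φ x * char (-α) x ∂(volume : Measure (Torus n)) = 0

def IsInnerSymbolF {n : ℕ} (φ : Torus n → ℂ) : Prop :=
  IsAnalyticSymbolF φ ∧ ∀ᵐ x ∂(volume : Measure (Torus n)), ‖φ x‖ = 1

def tauMap {n : ℕ} (x : Torus n) : Torus n := fun j => ∑ k ∈ Finset.Ici j, x k

def sigmaMap {n : ℕ} (x : Torus n) : Torus n :=
  fun j => if h : (j : ℕ) + 1 < n then x j - x ⟨(j : ℕ) + 1, h⟩ else x j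

def jacF {n : ℕ} (x : Torus n) : ℂ := ∏ j : Fin n, fourier (j.val : ℤ) (x j)

def jacInvF {n : ℕ} (x : Torus n) : ℂ :=
  ∏ j : Fin n, fourier (if j.val = 0 then (0 : ℤ) else -1) (x j)

/-! The matrix entry `⟪ζ^γ, H ζ^α⟫` (`α ∈ 𝓘`, `γ ∉ 𝓘`) equals `∫ conj ζ^γ · φ · ζ^α`, so it is
unchanged when `α` and `γ` are shifted by a common `δ`. For `n ≥ 2` and `γ ∉ 𝓘` there is `β ≠ 0`
whose partial sums are nonnegative and vanish at an index where `γ` violates the inequality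
defining `𝓘`; then `α + mβ ∈ 𝓘` and `γ + mβ ∉ 𝓘` for all `m : ℕ`. Compactness of `H` and
orthonormality of `(ζ^{γ+mβ})_m` force `⟪ζ^{γ+mβ}, H ζ^{α+mβ}⟫ → 0`, so the entry is `0`. The
entries with `γ ∈ 𝓘` vanish because `H` maps into `H²ᗮ`, hence `H = 0`. -/

open scoped InnerProductSpace

section HilbertSpace

variable {𝕜 E F : Type*} [RCLike 𝕜] [NormedAddCommGroup E] [InnerProductSpace 𝕜 E]
  [NormedAddCommGroup F] [InnerProductSpace 𝕜 F]

theorem Orthonormal.tendsto_inner_cofinite_zero {ι : Type*} {v : ι → E} (hv : Orthonormal 𝕜 v)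
    (x : E) : Tendsto (fun i => ⟪v i, x⟫_𝕜) cofinite (𝓝 0) := by
  rw [tendsto_zero_iff_norm_tendsto_zero]
  simpa [Real.sqrt_sq (norm_nonneg _)] using
    (hv.inner_products_summable (x := x)).tendsto_cofinite_zero.sqrt

theorem Orthonormal.mem_orthogonal_span_image {ι : Type*} {v : ι → E} (hv : Orthonormal 𝕜 v)
    {s : Set ι} {j : ι} (hj : j ∉ s) : v j ∈ (Submodule.span 𝕜 (v '' s))ᗮ := by
  refine (Submodule.isOrtho_span.2 ?_).le (Submodule.mem_span_singleton_self (v j))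
  rintro _ rfl _ ⟨i, hi, rfl⟩
  exact hv.2 (ne_of_mem_of_not_mem hi hj).symm

theorem HilbertBasis.eq_zero_of_forall_inner_eq_zero {ι : Type*} (b : HilbertBasis ι 𝕜 E) {x : E}
    (h : ∀ i, ⟪b i, x⟫_𝕜 = 0) : x = 0 :=
  b.repr.map_eq_zero_iff.1 <| lp.ext <| funext fun i => by simp [b.repr_apply_apply, h]

theorem HilbertBasis.eq_zero_of_inner_apply_eq_zero {ι : Type*} (b : HilbertBasis ι 𝕜 E)
    {s : Set ι} {K : Submodule 𝕜 E} [K.HasOrthogonalProjection]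
    (hK : K = (Submodule.span 𝕜 (b '' s)).topologicalClosure) (T : K →L[𝕜] E)
    (hT : ∀ x, T x ∈ Kᗮ) (hcoeff : ∀ i ∈ s, ∀ j ∉ s, ∀ hi : b i ∈ K, ⟪b j, T ⟨b i, hi⟩⟫_𝕜 = 0) :
    T = 0 := by
  have hmem : ∀ i ∈ s, b i ∈ K := fun i hi =>
    hK ▸ Submodule.le_topologicalClosure _ (Submodule.subset_span (Set.mem_image_of_mem b hi))
  have hgen : Set.EqOn (T ∘L K.orthogonalProjectionOnto) (0 : E →L[𝕜] E) (b '' s) := by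
    rintro _ ⟨i, hi, rfl⟩
    have hproj : K.orthogonalProjectionOnto (b i) = ⟨b i, hmem i hi⟩ :=
      Submodule.orthogonalProjectionOnto_mem_subspace_eq_self ⟨b i, hmem i hi⟩
    simp only [ContinuousLinearMap.comp_apply, hproj, zero_apply]
    refine b.eq_zero_of_forall_inner_eq_zero fun j => ?_
    by_cases hj : j ∈ s
    · exact Submodule.inner_right_of_mem_orthogonal (hmem j hj) (hT _)
    · exact hcoeff i hi j hj _
  ext1 x
  have hx : (x : E) ∈ closure (Submodule.span 𝕜 (b '' s) : Set E) := by
    rw [← Submodule.topologicalClosure_coe, ← hK]; exact x.2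
  simpa using ContinuousLinearMap.eqOn_closure_span hgen hx

theorem IsCompactOperator.tendsto_inner_apply_of_orthonormal {T : E →L[𝕜] F}
    (hT : IsCompactOperator T) {e : ℕ → F} (he : Orthonormal 𝕜 e) {f : ℕ → E} {C : ℝ}
    (hf : ∀ m, ‖f m‖ ≤ C) : Tendsto (fun m => ⟪e m, T (f m)⟫_𝕜) atTop (𝓝 0) := by
  obtain ⟨K, hK, hTK⟩ := IsCompactOperator.image_closedBall_subset_compact
    (f := (T : E →ₗ[𝕜] F)) hT C
  refine tendsto_of_subseq_tendsto fun ns hns => ?_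
  obtain ⟨a, -, φ, hφ, hlim⟩ := hK.tendsto_subseq fun k =>
    hTK ⟨f (ns k), by simpa using hf (ns k), rfl⟩
  refine ⟨φ, ?_⟩
  have hfar : Tendsto (fun k => ⟪e (ns (φ k)), a⟫_𝕜) atTop (𝓝 0) :=
    (he.tendsto_inner_cofinite_zero a).comp
      (Nat.cofinite_eq_atTop ▸ hns.comp hφ.tendsto_atTop)
  have hnear : Tendsto (fun k => ⟪e (ns (φ k)), T (f (ns (φ k))) - a⟫_𝕜) atTop (𝓝 0) :=
    squeeze_zero_norm (fun k => (norm_inner_le_norm _ _).trans_eq (by rw [he.1, one_mul]; rfl))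
      (tendsto_iff_norm_sub_tendsto_zero.1 hlim)
  simpa [inner_sub_right] using hnear.add hfar

end HilbertSpace

lemma volume_torus_eq_pi_haarAddCircle (n : ℕ) :
    (volume : Measure (Torus n)) = Measure.pi fun _ => AddCircle.haarAddCircle := by
  rw [volume_pi, AddCircle.volume_eq_smul_haarAddCircle, ENNReal.ofReal_one, one_smul]

/- Mathlib's `mFourierBasis` lives on `L²` of the product of the normalised Haar measures, which
equals `volume` on `Torus n` only propositionally, hence the transport through `μ`. -/
lemma exists_hilbertBasis_coe_eq_charL2 (n : ℕ) :
    ∃ b : HilbertBasis (Fin n → ℤ) ℂ (L2T n), ⇑b = charL2 := by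
  suffices ∀ (μ : Measure (Torus n)) [IsFiniteMeasure μ],
      μ = Measure.pi (fun _ => AddCircle.haarAddCircle) →
      ∃ b : HilbertBasis (Fin n → ℤ) ℂ (Lp ℂ 2 μ),
        ⇑b = fun α => ContinuousMap.toLp 2 μ ℂ (UnitAddTorus.mFourier α) from
    this _ (volume_torus_eq_pi_haarAddCircle n)
  rintro μ _ rfl
  exact ⟨UnitAddTorus.mFourierBasis, UnitAddTorus.coe_mFourierBasis⟩

lemma orthonormal_charL2 (n : ℕ) : Orthonormal ℂ (charL2 (n := n)) := by
  obtain ⟨b, hb⟩ := exists_hilbertBasis_coe_eq_charL2 n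
  exact hb ▸ b.orthonormal

lemma char_add {n : ℕ} (α β : Fin n → ℤ) (x : Torus n) : char (α + β) x = char α x * char β x := by
  simp only [char, Pi.add_apply, fourier_add, Finset.prod_mul_distrib]

lemma conj_char {n : ℕ} (α : Fin n → ℤ) (x : Torus n) : conj (char α x) = char (-α) x := by
  simp only [char, map_prod, Pi.neg_apply, fourier_neg]

lemma conj_char_mul_char {n : ℕ} (α : Fin n → ℤ) (x : Torus n) :
    conj (char α x) * char α x = 1 := by
  rw [conj_char, ← char_add, neg_add_cancel]
  simp [char]

lemma conj_char_add_mul_char_add {n : ℕ} (γ α δ : Fin n → ℤ) (c : ℂ) (x : Torus n) :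
    conj (char (γ + δ) x) * (c * char (α + δ) x) = conj (char γ x) * (c * char α x) := by
  rw [char_add, char_add, map_mul]
  linear_combination (conj (char γ x) * (c * char α x)) * conj_char_mul_char δ x

def hardyIndices (n : ℕ) : Set (Fin n → ℤ) :=
  {α | ∀ k : Fin n, 0 ≤ (∑ j ∈ Finset.Iic k, α j) + (k.val : ℤ)}

lemma sum_Iic_add_smul {n : ℕ} (α β : Fin n → ℤ) (m : ℤ) (k : Fin n) :
    ∑ j ∈ Finset.Iic k, (α + m • β) j = ∑ j ∈ Finset.Iic k, α j + m * ∑ j ∈ Finset.Iic k, β j := by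
  simp [Finset.sum_add_distrib, Finset.mul_sum]

lemma add_smul_mem_hardyIndices {n : ℕ} {α β : Fin n → ℤ} (hα : α ∈ hardyIndices n)
    (hβ : ∀ k, 0 ≤ ∑ j ∈ Finset.Iic k, β j) (m : ℕ) : α + (m : ℤ) • β ∈ hardyIndices n := by
  intro k
  rw [sum_Iic_add_smul]
  nlinarith [hα k, hβ k]

lemma exists_ne_zero_sum_Iic_nonneg_eq_zero {n : ℕ} (hn : 2 ≤ n) (k₀ : Fin n) :
    ∃ β : Fin n → ℤ, β ≠ 0 ∧ (∀ k, 0 ≤ ∑ j ∈ Finset.Iic k, β j) ∧ ∑ j ∈ Finset.Iic k₀, β j = 0 := by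
  have hsingle (i k : Fin n) :
      ∑ j ∈ Finset.Iic k, Pi.single i (1 : ℤ) j = if i ≤ k then 1 else 0 := by
    simp [Finset.sum_pi_single']
  -- the partial sums of `β` are the indicator of `k ≥ 1`, resp. of `k < k₀`
  by_cases hk₀ : k₀.val = 0
  · refine ⟨Pi.single ⟨1, by omega⟩ 1, Pi.single_ne_zero_iff.2 one_ne_zero, fun k => ?_, ?_⟩
    · rw [hsingle]; split_ifs <;> norm_num
    · rw [hsingle, if_neg (by simp [Fin.le_def, hk₀])]
  · refine ⟨Pi.single ⟨0, by omega⟩ 1 - Pi.single k₀ 1, ?_, fun k => ?_, ?_⟩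
    · intro h
      have := congrFun h ⟨0, by omega⟩
      simp [Fin.ext_iff, Ne.symm hk₀] at this
    · have h0k : (⟨0, by omega⟩ : Fin n) ≤ k := Nat.zero_le _
      simp only [Pi.sub_apply, Finset.sum_sub_distrib, hsingle, if_pos h0k]
      split_ifs <;> norm_num
    · simp only [Pi.sub_apply, Finset.sum_sub_distrib, hsingle]
      simp [Fin.le_def]

lemma charL2_mem_hardyT {n : ℕ} {α : Fin n → ℤ} (hα : α ∈ hardyIndices n) :
    charL2 α ∈ hardyT n :=
  Submodule.le_topologicalClosure _ (Submodule.subset_span ⟨α, hα, rfl⟩)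

lemma charL2_mem_orthogonal_hardyT {n : ℕ} {γ : Fin n → ℤ} (hγ : γ ∉ hardyIndices n) :
    charL2 γ ∈ (hardyT n)ᗮ := by
  rw [hardyT, Submodule.orthogonal_closure]
  exact (orthonormal_charL2 n).mem_orthogonal_span_image hγ

lemma IsHankelT.inner_charL2_apply {n : ℕ} {φ : LinfT n} {H : hardyT n →L[ℂ] L2T n}
    (hH : IsHankelT (⇑φ) H) {γ α : Fin n → ℤ} (hγ : γ ∉ hardyIndices n)
    (hα : charL2 α ∈ hardyT n) :
    ⟪charL2 γ, H ⟨charL2 α, hα⟩⟫_ℂ = ∫ x, conj (char γ x) * (φ x * char α x) := by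
  rw [hH.2 _ _ (charL2_mem_orthogonal_hardyT hγ)]
  refine integral_congr_ae ?_
  filter_upwards [MemLp.coeFn_toLp (char_memLp γ 2), MemLp.coeFn_toLp (char_memLp α 2)]
    with x hγx hαx
  simp only [charL2] at hγx hαx ⊢
  rw [hγx, hαx]

lemma IsHankelT.inner_charL2_apply_eq_zero {n : ℕ} (hn : 2 ≤ n) {φ : LinfT n}
    {H : hardyT n →L[ℂ] L2T n} (hH : IsHankelT (⇑φ) H) (hcpt : IsCompactOperator H)
    {γ α : Fin n → ℤ} (hγ : γ ∉ hardyIndices n) (hα : α ∈ hardyIndices n) :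
    ⟪charL2 γ, H ⟨charL2 α, charL2_mem_hardyT hα⟩⟫_ℂ = 0 := by
  obtain ⟨k₀, hk₀⟩ : ∃ k₀ : Fin n, (∑ j ∈ Finset.Iic k₀, γ j) + (k₀.val : ℤ) < 0 := by
    simpa [hardyIndices] using hγ
  obtain ⟨β, hβ0, hβ, hβk₀⟩ := exists_ne_zero_sum_Iic_nonneg_eq_zero hn k₀
  have hγm (m : ℕ) : γ + (m : ℤ) • β ∉ hardyIndices n := fun h => by
    have := h k₀
    rw [sum_Iic_add_smul, hβk₀] at this
    omega
  have he : Orthonormal ℂ fun m : ℕ => charL2 (γ + (m : ℤ) • β) :=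
    (orthonormal_charL2 n).comp _
      ((add_right_injective γ).comp ((smul_left_injective ℤ hβ0).comp Nat.cast_injective))
  have hlim := hcpt.tendsto_inner_apply_of_orthonormal he (C := 1)
    (f := fun m => ⟨_, charL2_mem_hardyT (add_smul_mem_hardyIndices hα hβ m)⟩)
    fun m => ((orthonormal_charL2 n).1 _).le
  simp only [hH.inner_charL2_apply (hγm _), conj_char_add_mul_char_add,
    ← hH.inner_charL2_apply hγ (charL2_mem_hardyT hα)] at hlim
  exact tendsto_nhds_unique tendsto_const_nhds hlim

/-- The only compact Hankel operator on `H²(∂_d△ₙ)` is the zero operator. -/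
theorem stmt15 {n : ℕ} (hn : 2 ≤ n) (φ : LinfT n)
    (H : hardyT n →L[ℂ] L2T n) (hH : IsHankelT (⇑φ) H)
    (hcpt : IsCompactOperator H) : H = 0 := by
  obtain ⟨b, hb⟩ := exists_hilbertBasis_coe_eq_charL2 n
  refine b.eq_zero_of_inner_apply_eq_zero (s := hardyIndices n) (by rw [hb]; rfl) H hH.1 ?_
  intro α hα γ hγ hαH
  simp only [hb]
  exact hH.inner_charL2_apply_eq_zero hn hcpt hγ hα
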